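/- arXiv:2404.08442 — 2 statements merged into one kernel-verified Lean document; each statement's English description precedes it below -/
import Mathlib

section
/- Let A be a symmetric positive definite d×d real matrix and 0 ≤ μ < 1. If |A|²/(tr A)² ≤ 1/(d − μ²) (Frobenius norm), then with γ = tr A / |A|² one has |γA − I_d| ≤ μ. -/
noncomputable def frobSq {d : ℕ} (A : Matrix (Fin d) (Fin d) ℝ) : ℝ := ∑ i, ∑ j, (A i j) ^ 2

/-! With `t = tr A` and `F = |A|²`, expanding the square gives
`|γA - I|² = γ²F - 2γt + d = d - t²/F` for `γ = t/F`, and the Cordes condition `F/t² ≤ 1/(d - μ²)`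
gives `d - t²/F ≤ μ²` as soon as `t ≠ 0`, which positive definiteness guarantees. -/

section Frobenius

variable {d : ℕ} (A : Matrix (Fin d) (Fin d) ℝ)

lemma frobSq_smul_sub_one (c : ℝ) :
    frobSq (c • A - 1) = c ^ 2 * frobSq A - 2 * c * A.trace + d := by
  have hentry : ∀ i j : Fin d, ((c • A - 1) i j) ^ 2 =
      c ^ 2 * (A i j) ^ 2 - 2 * c * (if i = j then A i j else 0)
        + (if i = j then (1 : ℝ) else 0) := by
    intro i j
    simp only [Matrix.sub_apply, Matrix.smul_apply, Matrix.one_apply, smul_eq_mul]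
    split <;> ring
  simp_rw [frobSq, hentry, Finset.sum_add_distrib, Finset.sum_sub_distrib, ← Finset.mul_sum,
    Finset.sum_ite_eq, Finset.mem_univ, if_true]
  simp [Matrix.trace, Finset.card_univ]

lemma frobSq_trace_div_smul_sub_one :
    frobSq ((A.trace / frobSq A) • A - 1) = d - A.trace ^ 2 / frobSq A := by
  rw [frobSq_smul_sub_one]
  rcases eq_or_ne (frobSq A) 0 with hF | hF
  · simp [hF]
  · field_simp
    ring

lemma frobSq_pos_of_trace_ne_zero (ht : A.trace ≠ 0) : 0 < frobSq A := by
  obtain ⟨i, -, hi⟩ := Finset.exists_ne_zero_of_sum_ne_zero ht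
  calc 0 < A i i ^ 2 := pow_pos (abs_pos.mpr hi) 2 |>.trans_eq (sq_abs _)
    _ ≤ ∑ j, A i j ^ 2 :=
      Finset.single_le_sum (f := fun j ↦ A i j ^ 2) (fun _ _ ↦ sq_nonneg _) (Finset.mem_univ i)
    _ ≤ frobSq A :=
      Finset.single_le_sum (f := fun k ↦ ∑ j, A k j ^ 2)
        (fun _ _ ↦ Finset.sum_nonneg fun _ _ ↦ sq_nonneg _) (Finset.mem_univ i)

end Frobenius

lemma sub_sq_div_le_sq_of_div_sq_le_one_div {n μ t F : ℝ} (hF : 0 < F) (ht : t ≠ 0)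
    (hC : F / t ^ 2 ≤ 1 / (n - μ ^ 2)) : n - t ^ 2 / F ≤ μ ^ 2 := by
  have hquot : 0 ≤ t ^ 2 / F := by positivity
  rcases le_or_gt (n - μ ^ 2) 0 with hn | hn
  · linarith
  · have : n - μ ^ 2 ≤ t ^ 2 / F := by
      rwa [← one_div_div, le_one_div hn (by positivity)]
    linarith

theorem stmt0_general {d : ℕ} (A : Matrix (Fin d) (Fin d) ℝ) (hpd : A.PosDef)
    (μ : ℝ) (hμ0 : 0 ≤ μ)
    (hC : frobSq A / (Matrix.trace A) ^ 2 ≤ 1 / ((d : ℝ) - μ ^ 2)) :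
    Real.sqrt (frobSq ((Matrix.trace A / frobSq A) • A - 1)) ≤ μ := by
  rw [Real.sqrt_le_left hμ0, frobSq_trace_div_smul_sub_one]
  rcases Nat.eq_zero_or_pos d with rfl | hd
  · simpa [Matrix.trace] using sq_nonneg μ
  · have := Fin.pos_iff_nonempty.mp hd
    have ht := hpd.trace_pos.ne'
    exact sub_sq_div_le_sq_of_div_sq_le_one_div (frobSq_pos_of_trace_ne_zero A ht) ht hC

theorem stmt0 {d : ℕ} (A : Matrix (Fin d) (Fin d) ℝ) (hA : A.IsSymm) (hpd : A.PosDef)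
    (μ : ℝ) (hμ0 : 0 ≤ μ) (hμ1 : μ < 1)
    (hC : frobSq A / (Matrix.trace A) ^ 2 ≤ 1 / ((d : ℝ) - μ ^ 2)) :
    Real.sqrt (frobSq ((Matrix.trace A / frobSq A) • A - 1)) ≤ μ :=
  stmt0_general A hpd μ hμ0 hC
end

section
/- Let A be a symmetric positive definite d×d real matrix and 0 ≤ μ < 1. If there exists γ > 0 such that |γA − I_d| ≤ μ (Frobenius norm), then A satisfies the μ-Cordes condition, i.e. |A|²/(tr A)² ≤ 1/(d − μ²). -/
lemma mul_le_sq_of_quadratic_nonpos {a t c γ : ℝ} (ha : 0 ≤ a)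
    (h : a * γ ^ 2 - 2 * t * γ + c ≤ 0) : a * c ≤ t ^ 2 := by
  nlinarith [mul_le_mul_of_nonneg_left h ha, sq_nonneg (a * γ - t)]

lemma div_le_one_div_of_mul_le {a b c : ℝ} (hb : 0 ≤ b) (hc : 0 < c) (h : a * c ≤ b) :
    a / b ≤ 1 / c := by
  calc a / b = a * c / b / c := by field_simp
    _ ≤ 1 / c := by gcongr; exact div_le_one_of_le₀ h hb

namespace frobSq

variable {d : ℕ}

lemma nonneg (A : Matrix (Fin d) (Fin d) ℝ) : 0 ≤ frobSq A :=
  Finset.sum_nonneg fun _ _ => Finset.sum_nonneg fun _ _ => sq_nonneg _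

lemma eq_trace_transpose_mul (A : Matrix (Fin d) (Fin d) ℝ) :
    frobSq A = (A.transpose * A).trace := by
  simp only [frobSq, Matrix.trace, Matrix.diag, Matrix.mul_apply, Matrix.transpose_apply, sq]
  exact Finset.sum_comm

lemma smul_sub_one (A : Matrix (Fin d) (Fin d) ℝ) (γ : ℝ) :
    frobSq (γ • A - 1) = frobSq A * γ ^ 2 - 2 * A.trace * γ + d := by
  simp only [eq_trace_transpose_mul, Matrix.transpose_sub, Matrix.transpose_smul,
    Matrix.transpose_one, Matrix.sub_mul, Matrix.mul_sub, Matrix.smul_mul, Matrix.mul_smul,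
    Matrix.mul_one, Matrix.one_mul, Matrix.trace_sub, Matrix.trace_smul, Matrix.trace_transpose,
    Matrix.trace_one, Fintype.card_fin, smul_eq_mul]
  ring

end frobSq

theorem stmt1_general {d : ℕ} (hd : 0 < d) (A : Matrix (Fin d) (Fin d) ℝ)
    (μ : ℝ) (hμ1 : μ < 1)
    (hγ : ∃ γ : ℝ, 0 < γ ∧ Real.sqrt (frobSq (γ • A - 1)) ≤ μ) :
    frobSq A / (Matrix.trace A) ^ 2 ≤ 1 / ((d : ℝ) - μ ^ 2) := by
  obtain ⟨γ, -, hγμ⟩ := hγ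
  obtain ⟨hμ0, hB⟩ := Real.sqrt_le_iff.mp hγμ
  rw [frobSq.smul_sub_one] at hB
  have hgap : 0 < (d : ℝ) - μ ^ 2 := by
    have : (1 : ℝ) ≤ d := by exact_mod_cast hd
    nlinarith
  refine div_le_one_div_of_mul_le (sq_nonneg _) hgap ?_
  exact mul_le_sq_of_quadratic_nonpos (γ := γ) (frobSq.nonneg A) (by linarith)

theorem stmt1 {d : ℕ} (hd : 0 < d) (A : Matrix (Fin d) (Fin d) ℝ) (hA : A.IsSymm) (hpd : A.PosDef)
    (μ : ℝ) (hμ0 : 0 ≤ μ) (hμ1 : μ < 1)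
    (hγ : ∃ γ : ℝ, 0 < γ ∧ Real.sqrt (frobSq (γ • A - 1)) ≤ μ) :
    frobSq A / (Matrix.trace A) ^ 2 ≤ 1 / ((d : ℝ) - μ ^ 2) :=
  stmt1_general hd A μ hμ1 hγ
end
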